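/- arXiv:2509.17180 — 4 statements merged into one kernel-verified Lean document; each statement's English description precedes it below -/
import Mathlib

section
/- Let x* ∈ ℝ^d, let X_1, …, X_n ∈ ℝ^d be fixed points, and let w ∈ ℝ^n be fixed weights with Σ_{i=1}^n w_i = 1. Suppose μ : ℝ^d → ℝ is Hölder continuous with constant a > 0 and exponent α > 0, and Y_i = μ(X_i) + ε_i where ε_1, …, ε_n are independent mean-zero σ-sub-Gaussian random variables. Then for any δ ∈ (0,1), with probability at least 1 − δ, |μ(x*) − Σ_{i=1}^n w_i Y_i| ≤ |Σ_{i=1}^n w_i (μ_e(X_i) − μ_e(x*))| + |Σ_{i=1}^n w_i (μ_o(X_i) − μ_o(x*))| + 2a Σ_{i=1}^n |w_i| 1(w_i < 0) ‖X_i − x*‖^α + σ ‖w‖_2 √(2 log(2/δ)), where ‖w‖_2 is the Euclidean norm of the weight vector. -/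
open MeasureTheory Real
open scoped ProbabilityTheory

open ProbabilityTheory in
lemma tail_bound_aux {Ω : Type*} [MeasureSpace Ω] [IsProbabilityMeasure (ℙ : Measure Ω)]
    {n : ℕ} (c : Fin n → ℝ) (σ : ℝ) (hσ : 0 < σ)
    (ε : Fin n → Ω → ℝ) (hmeas : ∀ i, Measurable (ε i))
    (hindep : iIndepFun ε ℙ)
    (hsubG : ∀ i (t : ℝ), Integrable (fun ω => exp (t * ε i ω)) ℙ ∧
      ∫ ω, exp (t * ε i ω) ≤ exp (σ ^ 2 * t ^ 2 / 2))
    (s : ℝ) (hs : 0 < s) (hW : 0 < ∑ i, c i ^ 2) :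
    (ℙ {ω | s ≤ ∑ i, c i * ε i ω}).toReal ≤
      exp (- s ^ 2 / (2 * σ ^ 2 * ∑ i, c i ^ 2)) := by
  set W := ∑ i, c i ^ 2 with hWdef
  set Z : Fin n → Ω → ℝ := fun i ω => c i * ε i ω with hZ
  set t : ℝ := s / (σ ^ 2 * W) with ht
  have ht0 : 0 < t := div_pos hs (by positivity)
  have hZmeas : ∀ i, Measurable (Z i) := fun i => (hmeas i).const_mul _
  have hZindep : iIndepFun Z ℙ :=
    hindep.comp (fun i x => c i * x) (fun i => measurable_const_mul _)
  have hZint : ∀ i (u : ℝ), Integrable (fun ω => exp (u * Z i ω)) ℙ := by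
    intro i u
    have := (hsubG i (u * c i)).1
    simpa [hZ, mul_assoc] using this
  have hmgf : ∀ i, mgf (Z i) ℙ t ≤ exp (σ ^ 2 * (t * c i) ^ 2 / 2) := by
    intro i
    have := (hsubG i (t * c i)).2
    simpa [mgf, hZ, mul_assoc] using this
  have hsum_eq : mgf (∑ i, Z i) ℙ t = ∏ i, mgf (Z i) ℙ t :=
    hZindep.mgf_sum hZmeas Finset.univ
  have hprod : ∏ i, mgf (Z i) ℙ t ≤ exp (σ ^ 2 * t ^ 2 * W / 2) := by
    calc ∏ i, mgf (Z i) ℙ t ≤ ∏ i, exp (σ ^ 2 * (t * c i) ^ 2 / 2) :=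
          Finset.prod_le_prod (fun i _ => mgf_nonneg) (fun i _ => hmgf i)
      _ = exp (∑ i, σ ^ 2 * (t * c i) ^ 2 / 2) := by rw [← Real.exp_sum]
      _ = exp (σ ^ 2 * t ^ 2 * W / 2) := by
          congr 1
          rw [hWdef, Finset.mul_sum, Finset.sum_div]
          congr 1; ext i; ring
  have hint : Integrable (fun ω => exp (t * (∑ i, Z i) ω)) ℙ :=
    hZindep.integrable_exp_mul_sum hZmeas (fun i _ => hZint i t)
  have hcher := measure_ge_le_exp_mul_mgf (X := ∑ i, Z i) (μ := ℙ) s ht0.le hint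
  have hset : {ω | s ≤ ∑ i, c i * ε i ω} = {ω | s ≤ (∑ i, Z i) ω} := by
    ext ω; simp [hZ]
  rw [hset]
  refine hcher.trans ?_
  have : exp (-t * s) * mgf (∑ i, Z i) ℙ t ≤ exp (-t * s) * exp (σ ^ 2 * t ^ 2 * W / 2) := by
    have := hsum_eq ▸ hprod
    exact mul_le_mul_of_nonneg_left this (exp_pos _).le
  refine this.trans ?_
  rw [← Real.exp_add]
  apply Real.exp_le_exp.mpr
  have hσW : σ ^ 2 * W ≠ 0 := by positivity
  rw [ht]
  field_simp
  ring_nf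
  apply le_of_eq
  field_simp

/-- Proposition 1 of the paper. For fixed normalized weights `w`
(`∑ w i = 1`), `μ` Hölder continuous with constant `a > 0` and exponent `α > 0`,
and `Y i = μ (X i) + ε i` with `ε i` independent mean-zero `σ`-sub-Gaussian
(`E[exp (t ε)] ≤ exp (σ² t² / 2)` for all `t`), with probability at least `1 - δ`,
`|μ x⋆ − ∑ w i * Y i|` is bounded by the even-part imbalance, the odd-part
imbalance, the asymmetry penalty on negative-weight points, and the noise bound
`σ ‖w‖₂ √(2 log (2/δ))`, where `μ_e(x) = (μ x + μ (-x))/2`,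
`μ_o(x) = (μ x - μ (-x))/2`, and `‖w‖₂ = √(∑ w i ^ 2)`. -/
theorem stmt_0 {d n : ℕ} {Ω : Type*} [MeasureSpace Ω]
    [IsProbabilityMeasure (ℙ : Measure Ω)]
    (xs : EuclideanSpace ℝ (Fin d)) (X : Fin n → EuclideanSpace ℝ (Fin d))
    (w : Fin n → ℝ) (hw : ∑ i, w i = 1)
    (μ : EuclideanSpace ℝ (Fin d) → ℝ) (a α σ : ℝ)
    (ha : 0 < a) (hα : 0 < α) (hσ : 0 < σ)
    (hHolder : ∀ x y : EuclideanSpace ℝ (Fin d), |μ x - μ y| ≤ a * ‖x - y‖ ^ α)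
    (ε : Fin n → Ω → ℝ) (hmeas : ∀ i, Measurable (ε i))
    (hindep : ProbabilityTheory.iIndepFun ε ℙ)
    (hsubG : ∀ i (t : ℝ), Integrable (fun ω => exp (t * ε i ω)) ℙ ∧
      ∫ ω, exp (t * ε i ω) ≤ exp (σ ^ 2 * t ^ 2 / 2))
    (Y : Fin n → Ω → ℝ) (hY : ∀ i ω, Y i ω = μ (X i) + ε i ω)
    (δ : ℝ) (hδ : δ ∈ Set.Ioo (0 : ℝ) 1) :
    ENNReal.ofReal (1 - δ) ≤
      ℙ {ω | |μ xs - ∑ i, w i * Y i ω| ≤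
        |∑ i, w i * ((μ (X i) + μ (-X i)) / 2 - (μ xs + μ (-xs)) / 2)|
          + |∑ i, w i * ((μ (X i) - μ (-X i)) / 2 - (μ xs - μ (-xs)) / 2)|
          + 2 * a * ∑ i, |w i| * (if w i < 0 then (1 : ℝ) else 0) * ‖X i - xs‖ ^ α
          + σ * Real.sqrt (∑ i, w i ^ 2) * Real.sqrt (2 * Real.log (2 / δ))} := by
  obtain ⟨hδ0, hδ1⟩ := hδ
  set W := ∑ i, w i ^ 2 with hWdef
  have hW : 0 < W := by
    rcases (Finset.sum_nonneg (fun i (_ : i ∈ Finset.univ) => sq_nonneg (w i))).lt_or_eq with h | h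
    · exact h
    · exfalso
      have hz : ∀ i ∈ Finset.univ, w i ^ 2 = 0 :=
        (Finset.sum_eq_zero_iff_of_nonneg (fun i _ => sq_nonneg (w i))).mp h.symm
      have : ∑ i, w i = 0 := Finset.sum_eq_zero fun i hi => pow_eq_zero_iff two_ne_zero |>.mp (hz i hi)
      rw [hw] at this; exact one_ne_zero this
  have hlog : 0 < Real.log (2 / δ) := by
    apply Real.log_pos
    rw [lt_div_iff₀ hδ0]
    linarith
  set s : ℝ := σ * Real.sqrt W * Real.sqrt (2 * Real.log (2 / δ)) with hsdef
  have hs : 0 < s := by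
    apply mul_pos (mul_pos hσ (Real.sqrt_pos.mpr hW))
    apply Real.sqrt_pos.mpr; linarith
  have hs2 : s ^ 2 = σ ^ 2 * W * (2 * Real.log (2 / δ)) := by
    rw [hsdef, mul_pow, mul_pow, Real.sq_sqrt hW.le, Real.sq_sqrt (by linarith : (0:ℝ) ≤ 2 * Real.log (2 / δ))]
  have hexp : exp (- s ^ 2 / (2 * σ ^ 2 * W)) = δ / 2 := by
    have h1 : - s ^ 2 / (2 * σ ^ 2 * W) = - Real.log (2 / δ) := by
      rw [hs2]; field_simp
    rw [h1, Real.exp_neg, Real.exp_log (by positivity), inv_div]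
  -- tail bounds
  have htail1 := tail_bound_aux w σ hσ ε hmeas hindep hsubG s hs (hWdef ▸ hW)
  have htail2 := tail_bound_aux (fun i => -w i) σ hσ ε hmeas hindep hsubG s hs
    (by simpa [neg_pow] using (hWdef ▸ hW))
  rw [hexp] at htail1
  have hW2 : (∑ i, (-w i) ^ 2) = W := by simp [hWdef]
  rw [hW2, hexp] at htail2
  -- the good event
  set S : Ω → ℝ := fun ω => ∑ i, w i * ε i ω with hS
  have hSmeas : Measurable S := by
    apply Finset.measurable_sum
    exact fun i _ => (hmeas i).const_mul _
  set A : Set Ω := {ω | |S ω| ≤ s} with hA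
  have hAmeas : MeasurableSet A := measurableSet_le (hSmeas.abs) measurable_const
  have hcompl : Aᶜ ⊆ {ω | s ≤ S ω} ∪ {ω | s ≤ ∑ i, (-w i) * ε i ω} := by
    intro ω hω
    simp only [hA, Set.mem_compl_iff, Set.mem_setOf_eq, not_le] at hω
    rcases lt_abs.mp hω with h | h
    · exact Or.inl h.le
    · right
      have hneg : ∑ i, (-w i) * ε i ω = - S ω := by
        simp only [hS, neg_mul, Finset.sum_neg_distrib]
      simp only [Set.mem_setOf_eq, hneg]
      linarith
  have hB1 : ℙ {ω | s ≤ S ω} ≤ ENNReal.ofReal (δ / 2) := by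
    rw [← ENNReal.ofReal_toReal (measure_ne_top ℙ _)]
    exact ENNReal.ofReal_le_ofReal htail1
  have hB2 : ℙ {ω | s ≤ ∑ i, (-w i) * ε i ω} ≤ ENNReal.ofReal (δ / 2) := by
    rw [← ENNReal.ofReal_toReal (measure_ne_top ℙ _)]
    exact ENNReal.ofReal_le_ofReal htail2
  have hAc : ℙ Aᶜ ≤ ENNReal.ofReal δ := by
    calc ℙ Aᶜ ≤ ℙ ({ω | s ≤ S ω} ∪ {ω | s ≤ ∑ i, (-w i) * ε i ω}) := measure_mono hcompl
      _ ≤ ℙ {ω | s ≤ S ω} + ℙ {ω | s ≤ ∑ i, (-w i) * ε i ω} := measure_union_le _ _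
      _ ≤ ENNReal.ofReal (δ / 2) + ENNReal.ofReal (δ / 2) := add_le_add hB1 hB2
      _ = ENNReal.ofReal δ := by
          rw [← ENNReal.ofReal_add (by linarith) (by linarith)]; norm_num
  have hPA : ENNReal.ofReal (1 - δ) ≤ ℙ A := by
    have h1 : ℙ A = 1 - ℙ Aᶜ := by
      rw [measure_compl hAmeas (measure_ne_top _ _), measure_univ]
      rw [ENNReal.sub_sub_cancel ENNReal.one_ne_top (prob_le_one)]
    rw [h1]
    calc ENNReal.ofReal (1 - δ) = 1 - ENNReal.ofReal δ := by
          rw [ENNReal.ofReal_sub _ hδ0.le, ENNReal.ofReal_one]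
      _ ≤ 1 - ℙ Aᶜ := tsub_le_tsub_left hAc 1
  refine le_trans hPA (measure_mono ?_)
  -- deterministic inclusion
  intro ω hω
  simp only [hA, Set.mem_setOf_eq] at hω ⊢
  have hsplit : μ xs - ∑ i, w i * Y i ω = (∑ i, w i * (μ xs - μ (X i))) - S ω := by
    have h1 : μ xs = ∑ i, w i * μ xs := by rw [← Finset.sum_mul, hw, one_mul]
    simp only [hS]
    nth_rewrite 1 [h1]
    rw [← Finset.sum_sub_distrib, ← Finset.sum_sub_distrib]
    apply Finset.sum_congr rfl; intro i _; rw [hY i ω]; ring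
  have hEO : (∑ i, w i * (μ (X i) - μ xs)) =
      (∑ i, w i * ((μ (X i) + μ (-X i)) / 2 - (μ xs + μ (-xs)) / 2))
      + (∑ i, w i * ((μ (X i) - μ (-X i)) / 2 - (μ xs - μ (-xs)) / 2)) := by
    rw [← Finset.sum_add_distrib]
    apply Finset.sum_congr rfl; intro i _; ring
  have hT3 : 0 ≤ 2 * a * ∑ i, |w i| * (if w i < 0 then (1 : ℝ) else 0) * ‖X i - xs‖ ^ α := by
    apply mul_nonneg (by linarith)
    apply Finset.sum_nonneg
    intro i _
    apply mul_nonneg (mul_nonneg (abs_nonneg _) (by split <;> norm_num))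
    positivity
  calc |μ xs - ∑ i, w i * Y i ω|
      = |(∑ i, w i * (μ xs - μ (X i))) - S ω| := by rw [hsplit]
    _ ≤ |∑ i, w i * (μ xs - μ (X i))| + |S ω| := abs_sub _ _
    _ = |∑ i, w i * (μ (X i) - μ xs)| + |S ω| := by
        rw [← abs_neg (∑ i, w i * (μ (X i) - μ xs))]
        congr 2
        rw [← Finset.sum_neg_distrib]
        apply Finset.sum_congr rfl; intro i _; ring
    _ ≤ |∑ i, w i * ((μ (X i) + μ (-X i)) / 2 - (μ xs + μ (-xs)) / 2)|
        + |∑ i, w i * ((μ (X i) - μ (-X i)) / 2 - (μ xs - μ (-xs)) / 2)| + |S ω| := by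
        rw [hEO]; exact add_le_add (abs_add_le _ _) le_rfl
    _ ≤ |∑ i, w i * ((μ (X i) + μ (-X i)) / 2 - (μ xs + μ (-xs)) / 2)|
        + |∑ i, w i * ((μ (X i) - μ (-X i)) / 2 - (μ xs - μ (-xs)) / 2)|
        + 2 * a * (∑ i, |w i| * (if w i < 0 then (1 : ℝ) else 0) * ‖X i - xs‖ ^ α)
        + σ * Real.sqrt (∑ i, w i ^ 2) * Real.sqrt (2 * Real.log (2 / δ)) := by
        rw [← hWdef, ← hsdef]
        linarith [hω]
end

section
/- Let x* ∈ ℝ^d, let X_1, …, X_n ∈ ℝ^d, let w ∈ ℝ^n, and let ε_1, …, ε_n ∈ ℝ with Y_i = μ(X_i) + ε_i. Suppose μ : ℝ^d → ℝ is Hölder continuous with constant a > 0 and exponent α > 0 and μ(0) = 0. Then |μ(x*) − Σ_{i=1}^n w_i Y_i| ≤ |Σ_{i=1}^n |w_i| μ(X_i^‡) − μ(x*)| + 2a Σ_{i=1}^n |w_i| 1(w_i < 0) ‖X_i‖^α + |Σ_{i=1}^n w_i ε_i|, where X_i^‡ = X_i if w_i ≥ 0 and X_i^‡ = −X_i if w_i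 < 0. -/
/-!
Write `μ(x*) - Σ wᵢ Yᵢ` as the imbalance `Σ |wᵢ| μ(Xᵢ‡) - μ(x*)` (with a sign), plus the per-point
discrepancies `|wᵢ| μ(Xᵢ‡) - wᵢ μ(Xᵢ)`, plus the noise `Σ wᵢ εᵢ`, and apply the triangle inequality.
A discrepancy vanishes when `wᵢ ≥ 0`; when `wᵢ < 0` it equals `|wᵢ| (μ(-Xᵢ) + μ(Xᵢ))`, and since
`μ(0) = 0` the Hölder condition gives `|μ(±Xᵢ)| ≤ a ‖Xᵢ‖^α`.
-/

open Finset

lemma abs_sub_weighted_sum_le {ι : Type*} [Fintype ι] (m : ℝ) (w f g e : ι → ℝ) :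
    |m - ∑ i, w i * (f i + e i)| ≤
      |∑ i, |w i| * g i - m| + ∑ i, |(|w i| * g i - w i * f i)| + |∑ i, w i * e i| := by
  have hsplit : m - ∑ i, w i * (f i + e i) =
      -(∑ i, |w i| * g i - m) + ∑ i, (|w i| * g i - w i * f i) - ∑ i, w i * e i := by
    simp only [mul_add, sum_add_distrib, sum_sub_distrib]
    ring
  calc |m - ∑ i, w i * (f i + e i)|
      ≤ |(-(∑ i, |w i| * g i - m))| + |∑ i, (|w i| * g i - w i * f i)|
          + |∑ i, w i * e i| := by
        rw [hsplit]
        exact (abs_sub _ _).trans (add_le_add_left (abs_add_le _ _) _)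
    _ ≤ _ := by
        rw [abs_neg]
        gcongr
        exact abs_sum_le_sum_abs _ _

section Reflection

variable {E : Type*} [SeminormedAddCommGroup E]

/-- The reflected point `x‡` of the paper. -/
noncomputable def reflect (w : ℝ) (x : E) : E := if 0 ≤ w then x else -x

lemma abs_abs_mul_reflect_sub_mul_le {μ : E → ℝ} {a α : ℝ}
    (hμ : ∀ x, |μ x| ≤ a * ‖x‖ ^ α) (w : ℝ) (x : E) :
    |(|w| * μ (reflect w x) - w * μ x)| ≤
      2 * a * (|w| * (if w < 0 then (1 : ℝ) else 0) * ‖x‖ ^ α) := by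
  rcases le_or_gt 0 w with hw | hw
  · simp [reflect, hw, abs_of_nonneg hw, not_lt.mpr hw]
  · have hsum : |w| * μ (reflect w x) - w * μ x = |w| * (μ (-x) + μ x) := by
      rw [reflect, if_neg hw.not_ge, abs_of_neg hw]
      ring
    have hpair : |μ (-x) + μ x| ≤ 2 * (a * ‖x‖ ^ α) :=
      calc |μ (-x) + μ x| ≤ |μ (-x)| + |μ x| := abs_add_le _ _
        _ ≤ a * ‖-x‖ ^ α + a * ‖x‖ ^ α := add_le_add (hμ _) (hμ _)
        _ = 2 * (a * ‖x‖ ^ α) := by rw [norm_neg]; ring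
    calc |(|w| * μ (reflect w x) - w * μ x)| = |w| * |μ (-x) + μ x| := by
          rw [hsum, abs_mul, abs_abs]
      _ ≤ |w| * (2 * (a * ‖x‖ ^ α)) := mul_le_mul_of_nonneg_left hpair (abs_nonneg w)
      _ = 2 * a * (|w| * (if w < 0 then (1 : ℝ) else 0) * ‖x‖ ^ α) := by
          rw [if_pos hw]; ring

end Reflection

theorem stmt_1_general {d n : ℕ} (xs : EuclideanSpace ℝ (Fin d))
    (X : Fin n → EuclideanSpace ℝ (Fin d)) (w : Fin n → ℝ) (ε : Fin n → ℝ)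
    (μ : EuclideanSpace ℝ (Fin d) → ℝ) (a α : ℝ)
    (hHolder : ∀ x y : EuclideanSpace ℝ (Fin d), |μ x - μ y| ≤ a * ‖x - y‖ ^ α)
    (hzero : μ 0 = 0)
    (Y : Fin n → ℝ) (hY : ∀ i, Y i = μ (X i) + ε i) :
    |μ xs - ∑ i, w i * Y i| ≤
      |(∑ i, |w i| * μ (if 0 ≤ w i then X i else -X i)) - μ xs|
        + 2 * a * ∑ i, |w i| * (if w i < 0 then (1 : ℝ) else 0) * ‖X i‖ ^ α
        + |∑ i, w i * ε i| := by
  have hgrowth : ∀ x, |μ x| ≤ a * ‖x‖ ^ α := fun x => by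
    simpa [hzero] using hHolder x 0
  simp only [hY]
  refine (abs_sub_weighted_sum_le (μ xs) w (fun i => μ (X i)) (fun i => μ (reflect (w i) (X i)))
    ε).trans ?_
  refine add_le_add (add_le_add le_rfl ?_) le_rfl
  rw [mul_sum]
  exact sum_le_sum fun i _ => abs_abs_mul_reflect_sub_mul_le hgrowth (w i) (X i)

/-- Worst-case extrapolation error bound (Equation (4) of the paper).
For `μ` Hölder continuous with constant `a > 0`, exponent `α > 0`, and `μ 0 = 0`,
and `Y i = μ (X i) + ε i`, the error of the linear smoother is bounded by the
imbalance of the reflected points `X‡ i` (where `X‡ i = X i` if `w i ≥ 0` and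
`X‡ i = -X i` otherwise), the nonlinearity error of negative-weight points, and
the noise term. -/
theorem stmt_1 {d n : ℕ} (xs : EuclideanSpace ℝ (Fin d))
    (X : Fin n → EuclideanSpace ℝ (Fin d)) (w : Fin n → ℝ) (ε : Fin n → ℝ)
    (μ : EuclideanSpace ℝ (Fin d) → ℝ) (a α : ℝ) (ha : 0 < a) (hα : 0 < α)
    (hHolder : ∀ x y : EuclideanSpace ℝ (Fin d), |μ x - μ y| ≤ a * ‖x - y‖ ^ α)
    (hzero : μ 0 = 0)
    (Y : Fin n → ℝ) (hY : ∀ i, Y i = μ (X i) + ε i) :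
    |μ xs - ∑ i, w i * Y i| ≤
      |(∑ i, |w i| * μ (if 0 ≤ w i then X i else -X i)) - μ xs|
        + 2 * a * ∑ i, |w i| * (if w i < 0 then (1 : ℝ) else 0) * ‖X i‖ ^ α
        + |∑ i, w i * ε i| :=
  stmt_1_general xs X w ε μ a α hHolder hzero Y hY
end

section
/- Let x* ∈ ℝ^d and let X_j, X_k ∈ ℝ^d with j ≠ k. Suppose μ : ℝ^d → ℝ is Hölder continuous with constant a > 0 and exponent α > 0, Y_j = μ(X_j) + ε_j and Y_k = μ(X_k) + ε_k, where ε_j and ε_k are independent mean-zero σ-sub-Gaussian random variables. Then for any δ ∈ (0,1), with probability at least 1 − δ, |μ_e(x*)| ≤ |(Y_j + Y_k)/2| + σ √(2 log(2/δ)) + a ‖X_k − (−X_j)‖^α + a ‖X_j − x*‖^α. -/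
open MeasureTheory Real
open scoped ProbabilityTheory

/-- Bound on the unobservable even part `μ_e(x⋆) = (μ x⋆ + μ (-x⋆))/2`
inside Proposition 2. For indices `j ≠ k`, with `Y j = μ (X j) + ε j` and
`Y k = μ (X k) + ε k` for independent mean-zero `σ`-sub-Gaussian `ε j`, `ε k`,
with probability at least `1 - δ`,
`|μ_e x⋆| ≤ |(Y j + Y k)/2| + σ √(2 log (2/δ)) + a ‖X k − (−X j)‖^α + a ‖X j − x⋆‖^α`. -/
theorem stmt_11 {d n : ℕ} {Ω : Type*} [MeasureSpace Ω]
    [IsProbabilityMeasure (ℙ : Measure Ω)]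
    (xs : EuclideanSpace ℝ (Fin d)) (X : Fin n → EuclideanSpace ℝ (Fin d))
    (j k : Fin n) (hjk : j ≠ k)
    (μ : EuclideanSpace ℝ (Fin d) → ℝ) (a α σ : ℝ)
    (ha : 0 < a) (hα : 0 < α) (hσ : 0 < σ)
    (hHolder : ∀ x y : EuclideanSpace ℝ (Fin d), |μ x - μ y| ≤ a * ‖x - y‖ ^ α)
    (ε : Fin n → Ω → ℝ) (hmeas : ∀ i, Measurable (ε i))
    (hindep : ProbabilityTheory.IndepFun (ε j) (ε k) ℙ)
    (hsubG : ∀ i (t : ℝ), Integrable (fun ω => exp (t * ε i ω)) ℙ ∧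
      ∫ ω, exp (t * ε i ω) ≤ exp (σ ^ 2 * t ^ 2 / 2))
    (Y : Fin n → Ω → ℝ) (hY : ∀ i ω, Y i ω = μ (X i) + ε i ω)
    (δ : ℝ) (hδ : δ ∈ Set.Ioo (0 : ℝ) 1) :
    ENNReal.ofReal (1 - δ) ≤
      ℙ {ω | |(μ xs + μ (-xs)) / 2| ≤
        |(Y j ω + Y k ω) / 2| + σ * Real.sqrt (2 * Real.log (2 / δ))
          + a * ‖X k - (-X j)‖ ^ α + a * ‖X j - xs‖ ^ α} := by
  obtain ⟨hδ0, hδ1⟩ := hδ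
  set L : ℝ := Real.sqrt (2 * Real.log (2 / δ)) with hLdef
  have hlog : 0 < Real.log (2 / δ) := Real.log_pos (by rw [lt_div_iff₀ hδ0]; linarith)
  have hL0 : 0 ≤ L := Real.sqrt_nonneg _
  have hL2 : L ^ 2 = 2 * Real.log (2 / δ) := Real.sq_sqrt (by positivity)
  set S : Ω → ℝ := ε j + ε k with hSdef
  have hSapp : ∀ ω, S ω = ε j ω + ε k ω := fun ω => rfl
  have hSmeas : Measurable S := (hmeas j).add (hmeas k)
  -- integrability of exp(t * S)
  have hint : ∀ t : ℝ, Integrable (fun ω => exp (t * S ω)) ℙ := fun t =>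
    hindep.integrable_exp_mul_add (hsubG j t).1 (hsubG k t).1
  -- mgf bound
  have hmgf : ∀ t : ℝ, ProbabilityTheory.mgf S ℙ t ≤ exp (σ ^ 2 * t ^ 2) := by
    intro t
    rw [hSdef, ProbabilityTheory.IndepFun.mgf_add' hindep
      (hmeas j).aestronglyMeasurable (hmeas k).aestronglyMeasurable]
    have h1 : ProbabilityTheory.mgf (ε j) ℙ t ≤ exp (σ ^ 2 * t ^ 2 / 2) := (hsubG j t).2
    have h2 : ProbabilityTheory.mgf (ε k) ℙ t ≤ exp (σ ^ 2 * t ^ 2 / 2) := (hsubG k t).2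
    have e : exp (σ ^ 2 * t ^ 2) = exp (σ ^ 2 * t ^ 2 / 2) * exp (σ ^ 2 * t ^ 2 / 2) := by
      rw [← Real.exp_add]; ring_nf
    rw [e]
    exact mul_le_mul h1 h2 ProbabilityTheory.mgf_nonneg (exp_pos _).le
  -- the Chernoff exponent computation
  set t0 : ℝ := L / σ with ht0def
  have ht0 : 0 ≤ t0 := div_nonneg hL0 hσ.le
  have hexp_val : exp (-t0 * (2 * σ * L)) * exp (σ ^ 2 * t0 ^ 2) = (δ / 2) ^ 2 := by
    rw [← Real.exp_add]
    have h1 : -t0 * (2 * σ * L) + σ ^ 2 * t0 ^ 2 = -(L ^ 2) := by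
      rw [ht0def]; field_simp; ring
    rw [h1, hL2]
    have h2 : -(2 * Real.log (2 / δ)) = Real.log (δ / 2) + Real.log (δ / 2) := by
      rw [show (δ / 2 : ℝ) = (2 / δ)⁻¹ by field_simp, Real.log_inv]; ring
    rw [h2, Real.exp_add, Real.exp_log (by linarith), sq]
  -- upper tail
  have hup : ℙ {ω | 2 * σ * L ≤ S ω} ≤ ENNReal.ofReal ((δ / 2) ^ 2) := by
    have h := ProbabilityTheory.measure_ge_le_exp_mul_mgf (X := S) (2 * σ * L) ht0 (hint t0)
    have h' : (ℙ {ω | 2 * σ * L ≤ S ω}).toReal ≤ (δ / 2) ^ 2 := by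
      refine h.trans ?_
      rw [← hexp_val]
      gcongr
      exact hmgf t0
    calc ℙ {ω | 2 * σ * L ≤ S ω}
        = ENNReal.ofReal (ℙ {ω | 2 * σ * L ≤ S ω}).toReal :=
          (ENNReal.ofReal_toReal (measure_ne_top _ _)).symm
      _ ≤ ENNReal.ofReal ((δ / 2) ^ 2) := ENNReal.ofReal_le_ofReal h'
  -- lower tail
  have hdown : ℙ {ω | S ω ≤ -(2 * σ * L)} ≤ ENNReal.ofReal ((δ / 2) ^ 2) := by
    have h := ProbabilityTheory.measure_le_le_exp_mul_mgf (X := S) (-(2 * σ * L))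
      (neg_nonpos_of_nonneg ht0) (hint (-t0))
    have h' : (ℙ {ω | S ω ≤ -(2 * σ * L)}).toReal ≤ (δ / 2) ^ 2 := by
      refine h.trans ?_
      have : exp (-(-t0) * -(2 * σ * L)) = exp (-t0 * (2 * σ * L)) := by ring_nf
      rw [this, ← hexp_val]
      gcongr
      rw [show σ ^ 2 * t0 ^ 2 = σ ^ 2 * (-t0) ^ 2 by ring]
      exact hmgf (-t0)
    calc ℙ {ω | S ω ≤ -(2 * σ * L)}
        = ENNReal.ofReal (ℙ {ω | S ω ≤ -(2 * σ * L)}).toReal :=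
          (ENNReal.ofReal_toReal (measure_ne_top _ _)).symm
      _ ≤ ENNReal.ofReal ((δ / 2) ^ 2) := ENNReal.ofReal_le_ofReal h'
  -- bad event
  set bad : Set Ω := {ω | σ * L < |S ω| / 2} with hbaddef
  have hbadmeas : MeasurableSet bad :=
    measurableSet_lt measurable_const (hSmeas.abs.div_const 2)
  have hbad : ℙ bad ≤ ENNReal.ofReal δ := by
    have hsub : bad ⊆ {ω | 2 * σ * L ≤ S ω} ∪ {ω | S ω ≤ -(2 * σ * L)} := by
      intro ω hω
      simp only [hbaddef, Set.mem_setOf_eq] at hω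
      rcases abs_cases (S ω) with ⟨h1, _⟩ | ⟨h1, _⟩
      · left; show 2 * σ * L ≤ S ω; linarith
      · right; show S ω ≤ -(2 * σ * L); linarith
    calc ℙ bad ≤ ℙ ({ω | 2 * σ * L ≤ S ω} ∪ {ω | S ω ≤ -(2 * σ * L)}) := measure_mono hsub
      _ ≤ ℙ {ω | 2 * σ * L ≤ S ω} + ℙ {ω | S ω ≤ -(2 * σ * L)} := measure_union_le _ _
      _ ≤ ENNReal.ofReal ((δ / 2) ^ 2) + ENNReal.ofReal ((δ / 2) ^ 2) := add_le_add hup hdown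
      _ = ENNReal.ofReal ((δ / 2) ^ 2 + (δ / 2) ^ 2) :=
          (ENNReal.ofReal_add (by positivity) (by positivity)).symm
      _ ≤ ENNReal.ofReal δ := ENNReal.ofReal_le_ofReal (by nlinarith)
  -- good event implies the target inequality
  have hsubset : badᶜ ⊆ {ω | |(μ xs + μ (-xs)) / 2| ≤
      |(Y j ω + Y k ω) / 2| + σ * L + a * ‖X k - (-X j)‖ ^ α + a * ‖X j - xs‖ ^ α} := by
    intro ω hω
    simp only [hbaddef, Set.mem_compl_iff, Set.mem_setOf_eq, not_lt] at hω
    simp only [Set.mem_setOf_eq]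
    have hA : |μ (X j) - μ xs| ≤ a * ‖X j - xs‖ ^ α := hHolder _ _
    have hB : |μ (X k) - μ (-xs)| ≤ a * ‖X k - (-X j)‖ ^ α + a * ‖X j - xs‖ ^ α := by
      have h1 : |μ (X k) - μ (-xs)| ≤ |μ (X k) - μ (-X j)| + |μ (-X j) - μ (-xs)| := by
        have := abs_add_le (μ (X k) - μ (-X j)) (μ (-X j) - μ (-xs))
        simpa using this
      have h2 : |μ (X k) - μ (-X j)| ≤ a * ‖X k - (-X j)‖ ^ α := hHolder _ _
      have h3 : |μ (-X j) - μ (-xs)| ≤ a * ‖X j - xs‖ ^ α := by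
        have := hHolder (-X j) (-xs)
        have hn : ‖(-X j : EuclideanSpace ℝ (Fin d)) - (-xs)‖ = ‖X j - xs‖ := by
          rw [show (-X j : EuclideanSpace ℝ (Fin d)) - (-xs) = -(X j - xs) by abel, norm_neg]
        rwa [hn] at this
      linarith
    have hident : (μ xs + μ (-xs)) / 2 = (Y j ω + Y k ω) / 2 - S ω / 2
        - ((μ (X j) - μ xs) + (μ (X k) - μ (-xs))) / 2 := by
      rw [hY j ω, hY k ω, hSapp]; ring
    have habs : |(μ xs + μ (-xs)) / 2| ≤ |(Y j ω + Y k ω) / 2| + |S ω| / 2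
        + (|μ (X j) - μ xs| + |μ (X k) - μ (-xs)|) / 2 := by
      rw [hident]
      have h1 : |(Y j ω + Y k ω) / 2 - S ω / 2
          - ((μ (X j) - μ xs) + (μ (X k) - μ (-xs))) / 2|
          ≤ |(Y j ω + Y k ω) / 2 - S ω / 2|
            + |((μ (X j) - μ xs) + (μ (X k) - μ (-xs))) / 2| := abs_sub _ _
      have h2 : |(Y j ω + Y k ω) / 2 - S ω / 2| ≤ |(Y j ω + Y k ω) / 2| + |S ω / 2| :=
        abs_sub _ _
      have h3 : |((μ (X j) - μ xs) + (μ (X k) - μ (-xs))) / 2|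
          ≤ (|μ (X j) - μ xs| + |μ (X k) - μ (-xs)|) / 2 := by
        rw [abs_div]
        have := abs_add_le (μ (X j) - μ xs) (μ (X k) - μ (-xs))
        simp only [abs_two]
        linarith
      have h4 : |S ω / 2| = |S ω| / 2 := by rw [abs_div, abs_two]
      linarith
    have hpow1 : (0:ℝ) ≤ a * ‖X k - (-X j)‖ ^ α := by positivity
    have hpow2 : (0:ℝ) ≤ a * ‖X j - xs‖ ^ α := by positivity
    linarith
  -- conclude
  calc ENNReal.ofReal (1 - δ)
      ≤ 1 - ENNReal.ofReal δ := by
        rw [← ENNReal.ofReal_one, ← ENNReal.ofReal_sub _ hδ0.le]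
      _ ≤ 1 - ℙ bad := tsub_le_tsub_left hbad 1
      _ = ℙ badᶜ := (prob_compl_eq_one_sub hbadmeas).symm
      _ ≤ _ := measure_mono hsubset
end

section
/- Let x* ∈ ℝ^d, let X_1, …, X_n ∈ ℝ^d, and suppose there is a bijection k : {1,…,n} → {1,…,n} such that X_{k(i)} = −X_i for all i (a symmetric design). Let w ∈ ℝ^n be fixed weights with Σ_{i=1}^n w_i = 1, let μ : ℝ^d → ℝ be Hölder continuous with constant a > 0 and exponent α > 0, and let Y_i = μ(X_i) + ε_i where ε_1, …, ε_n are independent mean-zero σ-sub-Gaussian random variables. Then for any δ ∈ (0,1), with probability at least 1 − δ, |μ(x*) − Σ_{i=1}^n w_i Y_i| ≤ |Σ_{i=1}^n w_i (Y_i + Y_{k(i)})/2 − μ_e(x*)| + |Σ_{i=1}^n w_i (μ_o(X_i) − μ_o(x*))| + 2a Σ_{i=1}^n |w_i| 1(w_i < 0) ‖X_i − x*‖^α + 2σ ‖w‖_2 √(2 log(4/δ)). -/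
open MeasureTheory Real
open scoped ProbabilityTheory

open ProbabilityTheory in
theorem my_chernoff_aux {Ω : Type*} [MeasureSpace Ω] [IsProbabilityMeasure (ℙ : Measure Ω)]
    {n : ℕ} (c : Fin n → ℝ) (ε : Fin n → Ω → ℝ) (hmeas : ∀ i, Measurable (ε i))
    (hindep : ProbabilityTheory.iIndepFun ε ℙ)
    (σ : ℝ)
    (hsubG : ∀ i (t : ℝ), Integrable (fun ω => exp (t * ε i ω)) ℙ ∧
      ∫ ω, exp (t * ε i ω) ≤ exp (σ ^ 2 * t ^ 2 / 2))
    (u C : ℝ) (hu : 0 ≤ u) (hC0 : 0 < σ ^ 2 * C) (hC : ∑ i, (c i) ^ 2 ≤ C) :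
    (ℙ {ω | u ≤ ∑ i, c i * ε i ω}).toReal ≤ exp (-(u ^ 2) / (2 * (σ ^ 2 * C))) := by
  set t : ℝ := u / (σ ^ 2 * C) with ht_def
  have ht : 0 ≤ t := div_nonneg hu hC0.le
  set Z : Fin n → Ω → ℝ := fun i ω => c i * ε i ω with hZ
  have hZmeas : ∀ i, Measurable (Z i) := fun i => (hmeas i).const_mul _
  have hZindep : iIndepFun Z ℙ :=
    hindep.comp (fun i (x : ℝ) => c i * x) (fun i => measurable_const_mul _)
  have hint : ∀ i ∈ Finset.univ, Integrable (fun ω => exp (t * Z i ω)) ℙ := by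
    intro i _
    have := (hsubG i (t * c i)).1
    simpa [hZ, mul_assoc] using this
  have hintegr : Integrable (fun ω => exp (t * (∑ i, Z i) ω)) ℙ :=
    hZindep.integrable_exp_mul_sum hZmeas hint
  have hmgf : mgf (∑ i, Z i) ℙ t ≤ exp (σ ^ 2 * t ^ 2 * C / 2) := by
    rw [hZindep.mgf_sum hZmeas]
    calc ∏ i, mgf (Z i) ℙ t ≤ ∏ i, exp (σ ^ 2 * (t * c i) ^ 2 / 2) := by
          refine Finset.prod_le_prod (fun i _ => mgf_nonneg) (fun i _ => ?_)
          have h2 := (hsubG i (t * c i)).2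
          unfold mgf
          simpa [hZ, mul_assoc] using h2
      _ = exp (∑ i, σ ^ 2 * (t * c i) ^ 2 / 2) := by rw [Real.exp_sum]
      _ ≤ exp (σ ^ 2 * t ^ 2 * C / 2) := by
          apply Real.exp_le_exp.mpr
          have heq : ∑ i, σ ^ 2 * (t * c i) ^ 2 / 2
              = (σ ^ 2 * t ^ 2 / 2) * ∑ i, (c i) ^ 2 := by
            rw [Finset.mul_sum]
            exact Finset.sum_congr rfl fun i _ => by ring
          rw [heq]
          have hst : 0 ≤ σ ^ 2 * t ^ 2 / 2 := by positivity
          nlinarith [mul_le_mul_of_nonneg_left hC hst]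
  have hset : {ω | u ≤ ∑ i, c i * ε i ω} = {ω | u ≤ (∑ i, Z i) ω} := by
    ext ω; simp [hZ]
  rw [hset]
  calc (ℙ {ω | u ≤ (∑ i, Z i) ω}).toReal
      ≤ exp (-t * u) * mgf (∑ i, Z i) ℙ t := measure_ge_le_exp_mul_mgf u ht hintegr
    _ ≤ exp (-t * u) * exp (σ ^ 2 * t ^ 2 * C / 2) := by
        exact mul_le_mul_of_nonneg_left hmgf (exp_pos _).le
    _ = exp (-t * u + σ ^ 2 * t ^ 2 * C / 2) := by rw [← Real.exp_add]
    _ = exp (-(u ^ 2) / (2 * (σ ^ 2 * C))) := by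
        congr 1
        rw [ht_def]
        field_simp
        ring

/-- Exactly-paired case of Proposition 2. For a symmetric design
(a bijection `k` with `X (k i) = -X i` for all `i`), normalized weights
(`∑ w i = 1`), `μ` Hölder continuous with constant `a > 0` and exponent `α > 0`,
and `Y i = μ (X i) + ε i` with independent mean-zero `σ`-sub-Gaussian noise,
with probability at least `1 - δ` the estimation error is bounded by the
observable even-part imbalance via pair averages `(Y i + Y (k i))/2`, the
odd-part imbalance, the asymmetry penalty on negative-weight points, and
`2 σ ‖w‖₂ √(2 log (4/δ))`, where `μ_e(x) = (μ x + μ (-x))/2`,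
`μ_o(x) = (μ x - μ (-x))/2`, and `‖w‖₂ = √(∑ w i ^ 2)`. -/
theorem stmt_12 {d n : ℕ} {Ω : Type*} [MeasureSpace Ω]
    [IsProbabilityMeasure (ℙ : Measure Ω)]
    (xs : EuclideanSpace ℝ (Fin d)) (X : Fin n → EuclideanSpace ℝ (Fin d))
    (k : Equiv.Perm (Fin n)) (hk : ∀ i, X (k i) = -X i)
    (w : Fin n → ℝ) (hw : ∑ i, w i = 1)
    (μ : EuclideanSpace ℝ (Fin d) → ℝ) (a α σ : ℝ)
    (ha : 0 < a) (hα : 0 < α) (hσ : 0 < σ)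
    (hHolder : ∀ x y : EuclideanSpace ℝ (Fin d), |μ x - μ y| ≤ a * ‖x - y‖ ^ α)
    (ε : Fin n → Ω → ℝ) (hmeas : ∀ i, Measurable (ε i))
    (hindep : ProbabilityTheory.iIndepFun ε ℙ)
    (hsubG : ∀ i (t : ℝ), Integrable (fun ω => exp (t * ε i ω)) ℙ ∧
      ∫ ω, exp (t * ε i ω) ≤ exp (σ ^ 2 * t ^ 2 / 2))
    (Y : Fin n → Ω → ℝ) (hY : ∀ i ω, Y i ω = μ (X i) + ε i ω)
    (δ : ℝ) (hδ : δ ∈ Set.Ioo (0 : ℝ) 1) :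
    ENNReal.ofReal (1 - δ) ≤
      ℙ {ω | |μ xs - ∑ i, w i * Y i ω| ≤
        |(∑ i, w i * ((Y i ω + Y (k i) ω) / 2)) - (μ xs + μ (-xs)) / 2|
          + |∑ i, w i * ((μ (X i) - μ (-X i)) / 2 - (μ xs - μ (-xs)) / 2)|
          + 2 * a * ∑ i, |w i| * (if w i < 0 then (1 : ℝ) else 0) * ‖X i - xs‖ ^ α
          + 2 * σ * Real.sqrt (∑ i, w i ^ 2) * Real.sqrt (2 * Real.log (4 / δ))} := by
  classical
  obtain ⟨hδ0, hδ1⟩ := hδ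
  -- basic positivity facts
  set W : ℝ := ∑ i, w i ^ 2 with hWdef
  have hWne : ∃ i, w i ≠ 0 := by
    by_contra h
    push_neg at h
    rw [Finset.sum_eq_zero (fun i _ => h i)] at hw
    norm_num at hw
  obtain ⟨i0, hi0⟩ := hWne
  have hW : 0 < W :=
    Finset.sum_pos' (fun i _ => sq_nonneg _) ⟨i0, Finset.mem_univ _, by positivity⟩
  have hL0 : 0 ≤ Real.log (4 / δ) := by
    apply Real.log_nonneg
    rw [le_div_iff₀ hδ0]
    linarith
  set u : ℝ := 2 * σ * Real.sqrt W * Real.sqrt (2 * Real.log (4 / δ)) with hudef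
  have hu : 0 ≤ u := by positivity
  set c : Fin n → ℝ := fun i => (w (k.symm i) - w i) / 2 with hc
  have hCw : ∑ i, (c i) ^ 2 ≤ W := by
    have h2 : ∑ i, w (k.symm i) ^ 2 = ∑ i, w i ^ 2 :=
      Equiv.sum_comp k.symm (fun i => w i ^ 2)
    calc ∑ i, (c i) ^ 2 ≤ ∑ i, (w (k.symm i) ^ 2 + w i ^ 2) / 2 := by
          refine Finset.sum_le_sum fun i _ => ?_
          simp only [hc]
          nlinarith [sq_nonneg (w (k.symm i) + w i)]
      _ = ((∑ i, w (k.symm i) ^ 2) + ∑ i, w i ^ 2) / 2 := by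
          rw [← Finset.sum_div, Finset.sum_add_distrib]
      _ = W := by rw [h2, hWdef]; ring
  -- the deterministic key identity
  have key : ∀ ω, μ xs - ∑ i, w i * Y i ω =
      (∑ i, c i * ε i ω)
      - ((∑ i, w i * ((Y i ω + Y (k i) ω) / 2)) - (μ xs + μ (-xs)) / 2)
      - (∑ i, w i * ((μ (X i) - μ (-X i)) / 2 - (μ xs - μ (-xs)) / 2)) := by
    intro ω
    have e1 : ∑ i, w i * Y i ω = (∑ i, w i * μ (X i)) + ∑ i, w i * ε i ω := by
      rw [← Finset.sum_add_distrib]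
      exact Finset.sum_congr rfl fun i _ => by rw [hY]; ring
    have e2 : ∑ i, w i * ((Y i ω + Y (k i) ω) / 2)
        = ((∑ i, w i * μ (X i)) + (∑ i, w i * μ (-X i))
            + (∑ i, w i * ε i ω) + ∑ i, w i * ε (k i) ω) / 2 := by
      have hterm : ∀ i ∈ Finset.univ, w i * ((Y i ω + Y (k i) ω) / 2)
          = (w i * μ (X i) + w i * μ (-X i) + w i * ε i ω + w i * ε (k i) ω) / 2 := by
        intro i _
        rw [hY, hY, hk]
        ring
      rw [Finset.sum_congr rfl hterm, ← Finset.sum_div, Finset.sum_add_distrib,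
        Finset.sum_add_distrib, Finset.sum_add_distrib]
    have e3 : ∑ i, w i * ((μ (X i) - μ (-X i)) / 2 - (μ xs - μ (-xs)) / 2)
        = ((∑ i, w i * μ (X i)) - ∑ i, w i * μ (-X i)) / 2 - (μ xs - μ (-xs)) / 2 := by
      have hterm : ∀ i ∈ Finset.univ, w i * ((μ (X i) - μ (-X i)) / 2 - (μ xs - μ (-xs)) / 2)
          = (w i * μ (X i) - w i * μ (-X i)) / 2 - w i * ((μ xs - μ (-xs)) / 2) := by
        intro i _
        ring
      rw [Finset.sum_congr rfl hterm, Finset.sum_sub_distrib, ← Finset.sum_div,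
        Finset.sum_sub_distrib, ← Finset.sum_mul, hw, one_mul]
    have eS : ∑ i, c i * ε i ω
        = ((∑ i, w i * ε (k i) ω) - ∑ i, w i * ε i ω) / 2 := by
      have h1 : ∑ i, w i * ε (k i) ω = ∑ i, w (k.symm i) * ε i ω := by
        rw [← Equiv.sum_comp k (fun i => w (k.symm i) * ε i ω)]
        simp
      calc ∑ i, c i * ε i ω
          = ∑ i, (w (k.symm i) * ε i ω - w i * ε i ω) / 2 :=
            Finset.sum_congr rfl fun i _ => by simp only [hc]; ring
        _ = ((∑ i, w (k.symm i) * ε i ω) - ∑ i, w i * ε i ω) / 2 := by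
            rw [← Finset.sum_div, Finset.sum_sub_distrib]
        _ = ((∑ i, w i * ε (k i) ω) - ∑ i, w i * ε i ω) / 2 := by rw [h1]
    rw [e1, e2, e3, eS]
    ring
  -- the good event
  set S : Ω → ℝ := fun ω => ∑ i, c i * ε i ω with hSdef
  have hSmeas : Measurable S :=
    Finset.measurable_sum _ (fun i _ => (hmeas i).const_mul _)
  set E : Set Ω := {ω | |S ω| ≤ u} with hEdef
  have hE : MeasurableSet E := measurableSet_le hSmeas.abs measurable_const
  -- inclusion
  have hsub : E ⊆ {ω | |μ xs - ∑ i, w i * Y i ω| ≤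
        |(∑ i, w i * ((Y i ω + Y (k i) ω) / 2)) - (μ xs + μ (-xs)) / 2|
          + |∑ i, w i * ((μ (X i) - μ (-X i)) / 2 - (μ xs - μ (-xs)) / 2)|
          + 2 * a * ∑ i, |w i| * (if w i < 0 then (1 : ℝ) else 0) * ‖X i - xs‖ ^ α
          + 2 * σ * Real.sqrt (∑ i, w i ^ 2) * Real.sqrt (2 * Real.log (4 / δ))} := by
    intro ω hω
    simp only [hEdef, Set.mem_setOf_eq] at hω ⊢
    have h3 : 0 ≤ 2 * a * ∑ i, |w i| * (if w i < 0 then (1 : ℝ) else 0) * ‖X i - xs‖ ^ α := by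
      refine mul_nonneg (by linarith) (Finset.sum_nonneg fun i _ => ?_)
      have h4 : (0 : ℝ) ≤ ‖X i - xs‖ ^ α := Real.rpow_nonneg (norm_nonneg _) _
      have h5 : (0 : ℝ) ≤ (if w i < 0 then (1 : ℝ) else 0) := by positivity
      positivity
    rw [key ω]
    set A := (∑ i, w i * ((Y i ω + Y (k i) ω) / 2)) - (μ xs + μ (-xs)) / 2 with hA
    set B := ∑ i, w i * ((μ (X i) - μ (-X i)) / 2 - (μ xs - μ (-xs)) / 2) with hB
    have habs : |S ω - A - B| ≤ |S ω| + |A| + |B| :=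
      (abs_sub _ _).trans (by linarith [abs_sub (S ω) A])
    have hSω : |S ω| ≤ 2 * σ * Real.sqrt W * Real.sqrt (2 * Real.log (4 / δ)) := hω
    rw [hWdef] at hSω
    linarith
  -- tail probability bounds
  have hσW : 0 < σ ^ 2 * W := by positivity
  have hexpδ : exp (-(u ^ 2) / (2 * (σ ^ 2 * W))) ≤ δ / 2 := by
    have hu2 : u ^ 2 = 4 * σ ^ 2 * W * (2 * Real.log (4 / δ)) := by
      rw [hudef, mul_pow, mul_pow, mul_pow,
        Real.sq_sqrt hW.le, Real.sq_sqrt (by linarith : (0 : ℝ) ≤ 2 * Real.log (4 / δ))]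
      ring
    have hexp_eq : -(u ^ 2) / (2 * (σ ^ 2 * W)) = -(4 * Real.log (4 / δ)) := by
      rw [hu2]
      field_simp
    rw [hexp_eq]
    have hδ2 : (0 : ℝ) < δ / 2 := by linarith
    rw [show δ / 2 = exp (Real.log (δ / 2)) from (Real.exp_log hδ2).symm]
    apply Real.exp_le_exp.mpr
    have l1 : Real.log (4 / δ) = Real.log 4 - Real.log δ :=
      Real.log_div (by norm_num) hδ0.ne'
    have l2 : Real.log (δ / 2) = Real.log δ - Real.log 2 :=
      Real.log_div hδ0.ne' (by norm_num)
    have l3 : Real.log δ ≤ 0 := Real.log_nonpos hδ0.le hδ1.le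
    have l4 : 0 ≤ Real.log 2 := Real.log_nonneg (by norm_num)
    have l5 : Real.log 4 = 2 * Real.log 2 := by
      rw [show (4 : ℝ) = 2 ^ 2 by norm_num, Real.log_pow]
      push_cast
      ring
    rw [l1, l2]
    linarith
  have tail1 : ℙ {ω | u ≤ S ω} ≤ ENNReal.ofReal (δ / 2) := by
    have h := my_chernoff_aux c ε hmeas hindep σ hsubG u W hu hσW hCw
    rw [← ENNReal.ofReal_toReal (measure_ne_top ℙ {ω | u ≤ S ω})]
    exact ENNReal.ofReal_le_ofReal (h.trans hexpδ)
  have tail2 : ℙ {ω | u ≤ -(S ω)} ≤ ENNReal.ofReal (δ / 2) := by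
    have hC' : ∑ i, (-(c i)) ^ 2 ≤ W := by simpa using hCw
    have h := my_chernoff_aux (fun i => -(c i)) ε hmeas hindep σ hsubG u W hu hσW hC'
    have hset : {ω | u ≤ ∑ i, -(c i) * ε i ω} = {ω | u ≤ -(S ω)} := by
      ext ω
      simp [hSdef, neg_mul, Finset.sum_neg_distrib]
    rw [hset] at h
    rw [← ENNReal.ofReal_toReal (measure_ne_top ℙ {ω | u ≤ -(S ω)})]
    exact ENNReal.ofReal_le_ofReal (h.trans hexpδ)
  have hcompl : ℙ Eᶜ ≤ ENNReal.ofReal δ := by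
    have hincl : Eᶜ ⊆ {ω | u ≤ S ω} ∪ {ω | u ≤ -(S ω)} := by
      intro ω hω
      simp only [hEdef, Set.mem_compl_iff, Set.mem_setOf_eq, not_le] at hω
      rcases lt_abs.mp hω with h | h
      · exact Or.inl h.le
      · exact Or.inr h.le
    calc ℙ Eᶜ ≤ ℙ ({ω | u ≤ S ω} ∪ {ω | u ≤ -(S ω)}) := measure_mono hincl
      _ ≤ ℙ {ω | u ≤ S ω} + ℙ {ω | u ≤ -(S ω)} := measure_union_le _ _
      _ ≤ ENNReal.ofReal (δ / 2) + ENNReal.ofReal (δ / 2) := add_le_add tail1 tail2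
      _ = ENNReal.ofReal δ := by
          rw [← ENNReal.ofReal_add (by linarith) (by linarith)]
          norm_num
  calc ENNReal.ofReal (1 - δ) ≤ 1 - ENNReal.ofReal δ := by
        apply ENNReal.le_sub_of_add_le_right ENNReal.ofReal_ne_top
        rw [← ENNReal.ofReal_add (by linarith) hδ0.le]
        simp
    _ ≤ 1 - ℙ Eᶜ := tsub_le_tsub_left hcompl 1
    _ = ℙ E := by
        rw [← prob_compl_eq_one_sub hE.compl, compl_compl]
    _ ≤ _ := measure_mono hsub
end
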